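/- Inverse neural feature repopulation (Theorem 4, weight-kernel form): Let ρ₀^(1),…,ρ₀^(L) be fixed probability measures on Z^(1),…,Z^(L), let w̃^(ℓ) : Z^(ℓ) × Z^(ℓ−1) → ℝ be jointly measurable kernels and ũ : Z^(L) → ℝ^K measurable, defining layer functions f̃^(ℓ) and output f̃ as in the continuous DNN. For any probability measures ρ^(ℓ) mutually absolutely continuous with ρ₀^(ℓ), with everywhere-positive finite density versions p^(ℓ) = dρ^(ℓ)/dρ₀^(ℓ) and p^(0) ≡ 1, there exist kernels w^(ℓ) and top weights u — namely w^(ℓ)(z,ζ) = w̃^(ℓ)(z,ζ)/p^(ℓ−1)(ζ) and u(z) = ũ(z)/p^(L)(z) — such that the network (ρ^(ℓ), w^(ℓ), u) has the same layer functions and output as (ρ₀^(ℓ), w̃^(ℓ), ũ) at every point and input, and such that ∫ r₂( ∫ r₁( w^(ℓ)(z,ζ) ) dρ^(ℓ)(z) ) dρ^(ℓ−1)(ζ) = ∫ r₂( ∫ r₁( w̃^(ℓ)(z,ζ)/p^(ℓ−1)(ζ) ) p^(ℓ)(z) dρ₀^(ℓ)(z) ) p^(ℓ−1)(ζ) dρ₀^(ℓ−1)(ζ)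 and ∫ r^(u)( u(z) ) dρ^(L)(z) = ∫ r^(u)( ũ(z)/p^(L)(z) ) p^(L)(z) dρ₀^(L)(z) for all measurable r₁, r₂ : ℝ → ℝ and r^(u) : ℝ^K → ℝ for which these integrals are absolutely convergent. -/

import Mathlib

open MeasureTheory
open scoped ENNReal NNReal BigOperators

/-- Node space of a DNN: layer `0` is the input index set `Fin d`; for `ℓ ≥ 0`,
`Node d Z (ℓ+1) = Z ℓ` is the node space of hidden layer `ℓ+1`. -/
def Node (d : ℕ) (Z : ℕ → Type) : ℕ → Type
  | 0 => Fin d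
  | ℓ + 1 => Z ℓ

instance nodeMeasurableSpace (d : ℕ) (Z : ℕ → Type) [∀ ℓ, MeasurableSpace (Z ℓ)] :
    ∀ ℓ, MeasurableSpace (Node d Z ℓ)
  | 0 => inferInstanceAs (MeasurableSpace (Fin d))
  | ℓ + 1 => inferInstanceAs (MeasurableSpace (Z ℓ))

variable {d : ℕ} {Z : ℕ → Type} [∀ ℓ, MeasurableSpace (Z ℓ)]

/-- The layer functions `f^{(ℓ)}(·;x)` of the continuous DNN. -/
noncomputable def ffun (ρ : ∀ ℓ, Measure (Z ℓ))
    (w : ∀ ℓ : ℕ, Node d Z (ℓ + 1) → Node d Z ℓ → ℝ)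
    (hact : ℕ → ℝ → ℝ) (x : Fin d → ℝ) : (ℓ : ℕ) → Node d Z ℓ → ℝ
  | 0, ζ => x ζ
  | 1, z => hact 1 ((d : ℝ)⁻¹ * ∑ j : Fin d, w 0 z j * x j)
  | ℓ + 2, z => hact (ℓ + 2) (∫ ζ, w (ℓ + 1) z ζ * ffun ρ w hact x (ℓ + 1) ζ ∂(ρ ℓ))

/-- `gfun ρ w hact x ℓ` is the pre-activation `g^{(ℓ+1)}(·;x)` of the continuous DNN. -/
noncomputable def gfun (ρ : ∀ ℓ, Measure (Z ℓ))
    (w : ∀ ℓ : ℕ, Node d Z (ℓ + 1) → Node d Z ℓ → ℝ)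
    (hact : ℕ → ℝ → ℝ) (x : Fin d → ℝ) : (ℓ : ℕ) → Node d Z (ℓ + 1) → ℝ
  | 0, z => (d : ℝ)⁻¹ * ∑ j : Fin d, w 0 z j * x j
  | ℓ + 1, z => ∫ ζ, w (ℓ + 1) z ζ * ffun ρ w hact x (ℓ + 1) ζ ∂(ρ ℓ)

/-- Output `f(x)` of the continuous DNN with `L = Lp + 1` hidden layers. -/
noncomputable def fout (Lp K : ℕ) (ρ : ∀ ℓ, Measure (Z ℓ))
    (w : ∀ ℓ : ℕ, Node d Z (ℓ + 1) → Node d Z ℓ → ℝ)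
    (hact : ℕ → ℝ → ℝ) (u : Z Lp → EuclideanSpace ℝ (Fin K)) (x : Fin d → ℝ) :
    EuclideanSpace ℝ (Fin K) :=
  ∫ z, ffun ρ w hact x (Lp + 1) z • u z ∂(ρ Lp)


/-- Density at the node level: `p^{(0)} ≡ 1` on the input layer, and `p^{(ℓ+1)} = p ℓ`
on hidden layer `ℓ+1`. -/
def pNode (d : ℕ) {Z : ℕ → Type} (p : ∀ ℓ, Z ℓ → ℝ) : ∀ ℓ, Node d Z ℓ → ℝ
  | 0 => fun _ => 1
  | ℓ + 1 => p ℓ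

/-- Measures at the node level: the uniform probability measure on `Fin d` at layer `0`,
and `ρ ℓ` on hidden layer `ℓ+1`. -/
noncomputable def nodeMeasure (d : ℕ) {Z : ℕ → Type} [∀ ℓ, MeasurableSpace (Z ℓ)]
    (ρ : ∀ ℓ, Measure (Z ℓ)) : ∀ ℓ, Measure (Node d Z ℓ)
  | 0 => ((d : ℝ≥0∞)⁻¹ • Measure.count : Measure (Fin d))
  | ℓ + 1 => ρ ℓ

/-!
Rescaling a kernel by `1 / p^{(ℓ-1)}(ζ)` exactly compensates for integrating against
`ρ^{(ℓ-1)} = p^{(ℓ-1)} ρ₀^{(ℓ-1)}` instead of `ρ₀^{(ℓ-1)}`: the two factors cancel pointwise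
in every integrand, so by induction on the layer the pre-activations, hence the layer
functions and the output, are unchanged.  The regularizer identities are the same
change of density applied to the inner and to the outer integral.
-/

theorem integral_withDensity_ofReal_eq_integral_smul {α E : Type*} [MeasurableSpace α]
    [NormedAddCommGroup E] [NormedSpace ℝ E] (μ : Measure α) {p : α → ℝ} (hp : Measurable p)
    (hp_nonneg : ∀ a, 0 ≤ p a) (g : α → E) :
    ∫ a, g a ∂μ.withDensity (fun a => ENNReal.ofReal (p a)) = ∫ a, p a • g a ∂μ := by
  rw [integral_withDensity_eq_integral_toReal_smul (by fun_prop)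
    (Filter.Eventually.of_forall fun _ => ENNReal.ofReal_lt_top)]
  simp only [ENNReal.toReal_ofReal (hp_nonneg _)]

noncomputable def repopulatedKernel (p : ∀ ℓ, Z ℓ → ℝ)
    (wT : ∀ ℓ : ℕ, Node d Z (ℓ + 1) → Node d Z ℓ → ℝ) :
    ∀ ℓ : ℕ, Node d Z (ℓ + 1) → Node d Z ℓ → ℝ :=
  fun ℓ z ζ => wT ℓ z ζ / pNode d p ℓ ζ

section Repopulation

variable {ρ₀ ρ : ∀ ℓ, Measure (Z ℓ)} {p : ∀ ℓ, Z ℓ → ℝ}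

theorem ffun_repopulatedKernel (hp_meas : ∀ ℓ, Measurable (p ℓ)) (hp_pos : ∀ ℓ z, 0 < p ℓ z)
    (hdens : ∀ ℓ, ρ ℓ = (ρ₀ ℓ).withDensity fun z => ENNReal.ofReal (p ℓ z))
    (wT : ∀ ℓ : ℕ, Node d Z (ℓ + 1) → Node d Z ℓ → ℝ) (hact : ℕ → ℝ → ℝ) (x : Fin d → ℝ) :
    ∀ ℓ (z : Node d Z ℓ), ffun ρ (repopulatedKernel p wT) hact x ℓ z = ffun ρ₀ wT hact x ℓ z
  | 0, _ => rfl
  | 1, z => by simp [ffun, repopulatedKernel, pNode]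
  | ℓ + 2, z => by
    simp only [ffun]
    rw [hdens ℓ, integral_withDensity_ofReal_eq_integral_smul _ (hp_meas ℓ)
      fun ζ => (hp_pos ℓ ζ).le]
    congr 2 with ζ
    rw [ffun_repopulatedKernel hp_meas hp_pos hdens wT hact x (ℓ + 1) ζ, smul_eq_mul]
    simp only [repopulatedKernel, pNode]
    field_simp [(hp_pos ℓ ζ).ne']

theorem fout_repopulatedKernel (hp_meas : ∀ ℓ, Measurable (p ℓ)) (hp_pos : ∀ ℓ z, 0 < p ℓ z)
    (hdens : ∀ ℓ, ρ ℓ = (ρ₀ ℓ).withDensity fun z => ENNReal.ofReal (p ℓ z))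
    {Lp K : ℕ} (wT : ∀ ℓ : ℕ, Node d Z (ℓ + 1) → Node d Z ℓ → ℝ) (hact : ℕ → ℝ → ℝ)
    (uT : Z Lp → EuclideanSpace ℝ (Fin K)) (x : Fin d → ℝ) :
    fout Lp K ρ (repopulatedKernel p wT) hact (fun z => (p Lp z)⁻¹ • uT z) x =
      fout Lp K ρ₀ wT hact uT x := by
  rw [fout, fout, hdens Lp, integral_withDensity_ofReal_eq_integral_smul _ (hp_meas Lp)
    fun z => (hp_pos Lp z).le]
  refine integral_congr_ae (.of_forall fun z => ?_)
  dsimp only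
  rw [smul_comm, smul_inv_smul₀ (hp_pos Lp z).ne']
  exact congrArg (· • uT z) (ffun_repopulatedKernel hp_meas hp_pos hdens wT hact x (Lp + 1) z)

theorem integral_nodeMeasure_eq_integral_pNode_smul (hp_meas : ∀ ℓ, Measurable (p ℓ))
    (hp_nonneg : ∀ ℓ z, 0 ≤ p ℓ z)
    (hdens : ∀ ℓ, ρ ℓ = (ρ₀ ℓ).withDensity fun z => ENNReal.ofReal (p ℓ z))
    {E : Type*} [NormedAddCommGroup E] [NormedSpace ℝ E] :
    ∀ t (g : Node d Z t → E),
      ∫ ζ, g ζ ∂nodeMeasure d ρ t = ∫ ζ, pNode d p t ζ • g ζ ∂nodeMeasure d ρ₀ t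
  | 0, g => by simp only [nodeMeasure, pNode, one_smul]
  | s + 1, g => by
    simp only [nodeMeasure, pNode]
    rw [hdens s]
    exact integral_withDensity_ofReal_eq_integral_smul _ (hp_meas s) (hp_nonneg s) g

theorem integral_nodeMeasure_comp_integral_eq (hp_meas : ∀ ℓ, Measurable (p ℓ))
    (hp_nonneg : ∀ ℓ z, 0 ≤ p ℓ z)
    (hdens : ∀ ℓ, ρ ℓ = (ρ₀ ℓ).withDensity fun z => ENNReal.ofReal (p ℓ z))
    (t : ℕ) (r : ℝ → ℝ) (F : Node d Z t → Z t → ℝ) :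
    ∫ ζ, r (∫ z, F ζ z ∂ρ t) ∂nodeMeasure d ρ t =
      ∫ ζ, r (∫ z, F ζ z * p t z ∂ρ₀ t) * pNode d p t ζ ∂nodeMeasure d ρ₀ t := by
  rw [integral_nodeMeasure_eq_integral_pNode_smul hp_meas hp_nonneg hdens]
  congr 1 with ζ
  rw [hdens t, integral_withDensity_ofReal_eq_integral_smul _ (hp_meas t) (hp_nonneg t)]
  simp only [smul_eq_mul, mul_comm]

end Repopulation

theorem inverse_neural_feature_repopulation_general
    (Lp d K : ℕ)
    (Z : ℕ → Type) [∀ ℓ, MeasurableSpace (Z ℓ)]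
    (ρ₀ ρ : ∀ ℓ, Measure (Z ℓ))
    (wT : ∀ ℓ : ℕ, Node d Z (ℓ + 1) → Node d Z ℓ → ℝ)
    (hact : ℕ → ℝ → ℝ)
    (uT : Z Lp → EuclideanSpace ℝ (Fin K))
    -- fixed versions of the densities `p^{(ℓ)} = dρ^{(ℓ)}/dρ₀^{(ℓ)}`, `0 < p < ∞`
    (p : ∀ ℓ, Z ℓ → ℝ) (hpmeas : ∀ ℓ, Measurable (p ℓ)) (hppos : ∀ ℓ z, 0 < p ℓ z)
    (hdens : ∀ ℓ, ρ ℓ = (ρ₀ ℓ).withDensity fun z => ENNReal.ofReal (p ℓ z)) :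
    ∃ (w : ∀ ℓ : ℕ, Node d Z (ℓ + 1) → Node d Z ℓ → ℝ)
      (u : Z Lp → EuclideanSpace ℝ (Fin K)),
      -- namely `w = w̃ / p` and `u = ũ / p^{(L)}`
      (∀ ℓ (z : Node d Z (ℓ + 1)) (ζ : Node d Z ℓ),
        w ℓ z ζ = wT ℓ z ζ / pNode d p ℓ ζ) ∧
      (∀ z, u z = (p Lp z)⁻¹ • uT z) ∧
      -- same layer functions and output at every point and input
      (∀ (x : Fin d → ℝ) (ℓ : ℕ), ℓ ≤ Lp + 1 → ∀ z : Node d Z ℓ,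
        ffun ρ w hact x ℓ z = ffun ρ₀ wT hact x ℓ z) ∧
      (∀ x : Fin d → ℝ, fout Lp K ρ w hact u x = fout Lp K ρ₀ wT hact uT x) ∧
      -- change-of-density formula for the regularizers
      (∀ (r₁ r₂ : ℝ → ℝ) (ru : EuclideanSpace ℝ (Fin K) → ℝ),
        Measurable r₁ → Measurable r₂ → Measurable ru →
        (∀ t : ℕ, t ≤ Lp →
          (∀ ζ : Node d Z t, Integrable (fun z : Z t => r₁ (w t z ζ)) (ρ t)) →
          Integrable (fun ζ : Node d Z t => r₂ (∫ z : Z t, r₁ (w t z ζ) ∂(ρ t)))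
            (nodeMeasure d ρ t) →
          ∫ ζ : Node d Z t, r₂ (∫ z : Z t, r₁ (w t z ζ) ∂(ρ t)) ∂(nodeMeasure d ρ t) =
            ∫ ζ : Node d Z t,
              r₂ (∫ z : Z t, r₁ (wT t z ζ / pNode d p t ζ) * p t z ∂(ρ₀ t)) *
                pNode d p t ζ ∂(nodeMeasure d ρ₀ t)) ∧
        (Integrable (fun z : Z Lp => ru (u z)) (ρ Lp) →
          ∫ z : Z Lp, ru (u z) ∂(ρ Lp) =
            ∫ z : Z Lp, ru ((p Lp z)⁻¹ • uT z) * p Lp z ∂(ρ₀ Lp))) := by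
  have hp_nonneg : ∀ ℓ z, 0 ≤ p ℓ z := fun ℓ z => (hppos ℓ z).le
  refine ⟨repopulatedKernel p wT, fun z => (p Lp z)⁻¹ • uT z, fun _ _ _ => rfl, fun _ => rfl,
    fun x ℓ _ => ffun_repopulatedKernel hpmeas hppos hdens wT hact x ℓ,
    fout_repopulatedKernel hpmeas hppos hdens wT hact uT,
    fun r₁ r₂ ru _ _ _ => ⟨fun t _ _ _ =>
      integral_nodeMeasure_comp_integral_eq hpmeas hp_nonneg hdens t r₂ _, fun _ => ?_⟩⟩
  rw [hdens Lp, integral_withDensity_ofReal_eq_integral_smul _ (hpmeas Lp) (hp_nonneg Lp)]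
  simp only [smul_eq_mul, mul_comm]

/-- **Inverse neural feature repopulation** (Theorem 4, weight-kernel form).  Given a
network `(ρ₀, w̃, ũ)` and probability measures `ρ^{(ℓ)}` mutually absolutely continuous
with `ρ₀^{(ℓ)}` with everywhere finite positive densities `p^{(ℓ)}` (and `p^{(0)} ≡ 1`),
the kernels `w^{(ℓ)}(z,ζ) = w̃^{(ℓ)}(z,ζ)/p^{(ℓ−1)}(ζ)` and top weights
`u = ũ / p^{(L)}` yield a network `(ρ, w, u)` with the same layer functions and output,
whose regularizer integrals transform by the change-of-density formula. -/
theorem inverse_neural_feature_repopulation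
    (Lp d K : ℕ) (hd : 1 ≤ d) (hK : 1 ≤ K)
    (Z : ℕ → Type) [∀ ℓ, MeasurableSpace (Z ℓ)]
    (ρ₀ ρ : ∀ ℓ, Measure (Z ℓ))
    [∀ ℓ, IsProbabilityMeasure (ρ₀ ℓ)] [∀ ℓ, IsProbabilityMeasure (ρ ℓ)]
    (wT : ∀ ℓ : ℕ, Node d Z (ℓ + 1) → Node d Z ℓ → ℝ)
    (hwTmeas : ∀ ℓ, Measurable fun q : Node d Z (ℓ + 1) × Node d Z ℓ => wT ℓ q.1 q.2)
    (hact : ℕ → ℝ → ℝ) (hhmeas : ∀ ℓ, Measurable (hact ℓ))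
    (uT : Z Lp → EuclideanSpace ℝ (Fin K)) (huTmeas : Measurable uT)
    -- fixed versions of the densities `p^{(ℓ)} = dρ^{(ℓ)}/dρ₀^{(ℓ)}`, `0 < p < ∞`
    (p : ∀ ℓ, Z ℓ → ℝ) (hpmeas : ∀ ℓ, Measurable (p ℓ)) (hppos : ∀ ℓ z, 0 < p ℓ z)
    (hdens : ∀ ℓ, ρ ℓ = (ρ₀ ℓ).withDensity fun z => ENNReal.ofReal (p ℓ z))
    -- absolute convergence of the integrals defining the network `(ρ₀, w̃, ũ)`
    (hint₁ : ∀ (x : Fin d → ℝ) (t : ℕ) (z : Z (t + 1)),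
      Integrable (fun ζ : Z t => wT (t + 1) z ζ * ffun ρ₀ wT hact x (t + 1) ζ) (ρ₀ t))
    (hint₂ : ∀ x : Fin d → ℝ,
      Integrable (fun z : Z Lp => ffun ρ₀ wT hact x (Lp + 1) z • uT z) (ρ₀ Lp)) :
    ∃ (w : ∀ ℓ : ℕ, Node d Z (ℓ + 1) → Node d Z ℓ → ℝ)
      (u : Z Lp → EuclideanSpace ℝ (Fin K)),
      -- namely `w = w̃ / p` and `u = ũ / p^{(L)}`
      (∀ ℓ (z : Node d Z (ℓ + 1)) (ζ : Node d Z ℓ),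
        w ℓ z ζ = wT ℓ z ζ / pNode d p ℓ ζ) ∧
      (∀ z, u z = (p Lp z)⁻¹ • uT z) ∧
      -- same layer functions and output at every point and input
      (∀ (x : Fin d → ℝ) (ℓ : ℕ), ℓ ≤ Lp + 1 → ∀ z : Node d Z ℓ,
        ffun ρ w hact x ℓ z = ffun ρ₀ wT hact x ℓ z) ∧
      (∀ x : Fin d → ℝ, fout Lp K ρ w hact u x = fout Lp K ρ₀ wT hact uT x) ∧
      -- change-of-density formula for the regularizers
      (∀ (r₁ r₂ : ℝ → ℝ) (ru : EuclideanSpace ℝ (Fin K) → ℝ),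
        Measurable r₁ → Measurable r₂ → Measurable ru →
        (∀ t : ℕ, t ≤ Lp →
          (∀ ζ : Node d Z t, Integrable (fun z : Z t => r₁ (w t z ζ)) (ρ t)) →
          Integrable (fun ζ : Node d Z t => r₂ (∫ z : Z t, r₁ (w t z ζ) ∂(ρ t)))
            (nodeMeasure d ρ t) →
          ∫ ζ : Node d Z t, r₂ (∫ z : Z t, r₁ (w t z ζ) ∂(ρ t)) ∂(nodeMeasure d ρ t) =
            ∫ ζ : Node d Z t,
              r₂ (∫ z : Z t, r₁ (wT t z ζ / pNode d p t ζ) * p t z ∂(ρ₀ t)) *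
                pNode d p t ζ ∂(nodeMeasure d ρ₀ t)) ∧
        (Integrable (fun z : Z Lp => ru (u z)) (ρ Lp) →
          ∫ z : Z Lp, ru (u z) ∂(ρ Lp) =
            ∫ z : Z Lp, ru ((p Lp z)⁻¹ • uT z) * p Lp z ∂(ρ₀ Lp))) :=
  inverse_neural_feature_repopulation_general Lp d K Z ρ₀ ρ wT hact uT p hpmeas hppos hdens
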